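/- arXiv:1710.05651 — 2 statements merged into one kernel-verified Lean document; each statement's English description precedes it below -/
import Mathlib

section
/- Equivalently: the number of full binary trees' parity depth-vectors with n+1 leaves having exactly r leaves of even depth (counted as distinct vectors in {0,1}^{n+1}, not as trees) equals C(n+1,r) if n+r ≡ 1 (mod 3) and n ≠ 2r-2, equals C(n+1,r) - 1 if n+r ≡ 1 (mod 3) and n = 2r-2, and equals 0 otherwise. -/
/-- A full binary tree: each node is a leaf or has exactly two ordered children. -/
inductive BTree where
  | leaf : BTree
  | node : BTree → BTree → BTree

/-- The depth sequence of a full binary tree: the depths of its leaves in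
left-to-right (preorder) order. -/
def BTree.depths : BTree → List ℕ
  | .leaf => [0]
  | .node l r => (BTree.depths l ++ BTree.depths r).map (· + 1)

/-- The number of leaves of a full binary tree. -/
def BTree.numLeaves (t : BTree) : ℕ := t.depths.length

/-!
Encode a leaf of odd depth by `true` and count it with sign `-1`, a leaf of even depth with `+1`.
The signed sum of a tree is `1` modulo `3`: a leaf gives `1`, and a node flips all parities of
its two subtrees, giving `-(1 + 1) = 1`. A tree with at least two leaves has a cherry, i.e. two
adjacent leaves of equal parity. Conversely every Boolean word with signed sum `1` that has two
equal adjacent letters (or is the word `[false]`) is realised: contract a well-chosen pair `x x`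
to `!x`, which keeps the signed sum and a pair of equal neighbours, realise the shorter word by
induction and split the corresponding leaf.

Among the `C(n+1, r)` vectors with `r` zeros the signed sum is `1` exactly when `n + r ≡ 1
(mod 3)`, and the only such vector without two equal neighbours is `0101…0`, which has `r` zeros
exactly when `n + 2 = 2 r`.
-/

open Finset

def HasAdjPair {α : Type*} (l : List α) : Prop := ∃ a x b, l = a ++ x :: x :: b

namespace HasAdjPair

variable {α β : Type*} {l : List α}

theorem map (h : HasAdjPair l) (f : α → β) : HasAdjPair (l.map f) := by
  obtain ⟨a, x, b, rfl⟩ := h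
  exact ⟨a.map f, f x, b.map f, by simp⟩

theorem append_right (h : HasAdjPair l) (l' : List α) : HasAdjPair (l ++ l') := by
  obtain ⟨a, x, b, rfl⟩ := h
  exact ⟨a, x, b ++ l', by simp⟩

theorem append_left (h : HasAdjPair l) (l' : List α) : HasAdjPair (l' ++ l) := by
  obtain ⟨a, x, b, rfl⟩ := h
  exact ⟨l' ++ a, x, b, by simp⟩

end HasAdjPair

theorem hasAdjPair_cons_cons {α : Type*} {x y : α} {l : List α} :
    HasAdjPair (x :: y :: l) ↔ x = y ∨ HasAdjPair (y :: l) := by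
  constructor
  · rintro ⟨_ | ⟨c, a⟩, z, b, h⟩
    · simp_all
    · simp only [List.cons_append, List.cons.injEq] at h
      exact .inr ⟨a, z, b, h.2⟩
  · rintro (rfl | h)
    · exact ⟨[], x, l, rfl⟩
    · exact h.append_left [x]

theorem hasAdjPair_iff_not_isChain {α : Type*} {l : List α} :
    HasAdjPair l ↔ ¬ l.IsChain (· ≠ ·) := by
  induction l with
  | nil => simp [HasAdjPair]
  | cons x l ih =>
    cases l with
    | nil => simp [HasAdjPair, List.singleton_eq_append_iff]
    | cons y l => rw [hasAdjPair_cons_cons, ih, List.isChain_cons_cons]; tauto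

def signSum (l : List Bool) : ZMod 3 := (l.map fun b => if b then -1 else 1).sum

@[simp] theorem signSum_cons (b : Bool) (l : List Bool) :
    signSum (b :: l) = (if b then -1 else 1) + signSum l := by
  simp [signSum]

@[simp] theorem signSum_append (l l' : List Bool) :
    signSum (l ++ l') = signSum l + signSum l' := by
  simp [signSum]

theorem signSum_map_not (l : List Bool) : signSum (l.map not) = -signSum l := by
  induction l with
  | nil => rfl
  | cons b l ih => cases b <;> simp [ih] <;> ring

theorem signSum_contract (a b : List Bool) (y : Bool) :
    signSum (a ++ (!y) :: b) = signSum (a ++ y :: y :: b) := by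
  have h : (if !y then (-1 : ZMod 3) else 1) = (if y then -1 else 1) + (if y then -1 else 1) := by
    cases y <;> decide
  simp only [signSum_append, signSum_cons, h, add_assoc]

theorem signSum_eq_count_sub_count (l : List Bool) :
    signSum l = l.count false - l.count true := by
  induction l with
  | nil => rfl
  | cons b l ih => cases b <;> simp [ih] <;> ring

theorem signSum_eq_one_iff (l : List Bool) :
    signSum l = 1 ↔ (l.length + l.count false) % 3 = 2 := by
  have hlen := l.count_true_add_count_false
  rw [signSum_eq_count_sub_count, sub_eq_iff_eq_add, ← Nat.cast_one, ← Nat.cast_add,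
    ZMod.natCast_eq_natCast_iff']
  omega

namespace BTree

def parities (t : BTree) : List Bool := t.depths.map Nat.bodd

theorem parities_node (l r : BTree) :
    (node l r).parities = (l.parities ++ r.parities).map not := by
  simp [parities, depths, Function.comp_def]

theorem signSum_parities (t : BTree) : signSum t.parities = 1 := by
  induction t with
  | leaf => rfl
  | node l r ihl ihr =>
    rw [parities_node, signSum_map_not, signSum_append, ihl, ihr]
    decide

theorem parities_eq_or_hasAdjPair (t : BTree) :
    t.parities = [false] ∨ HasAdjPair t.parities := by
  induction t with
  | leaf => exact .inl rfl
  | node l r ihl ihr =>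
    rw [parities_node]
    refine .inr ?_
    rcases ihl with hl | hl
    · rcases ihr with hr | hr
      · exact ⟨[], true, [], by simp [hl, hr]⟩
      · exact (hr.append_left _).map _
    · exact (hl.append_right _).map _

theorem exists_parities_expand {t : BTree} {a b : List Bool} {y : Bool}
    (h : t.parities = a ++ y :: b) : ∃ t' : BTree, t'.parities = a ++ (!y) :: (!y) :: b := by
  induction t generalizing a b y with
  | leaf =>
    obtain ⟨rfl, rfl, rfl⟩ : a = [] ∧ y = false ∧ b = [] := by
      cases a <;> simp_all [parities, depths, eq_comm]
    exact ⟨node leaf leaf, rfl⟩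
  | node l r ihl ihr =>
    have h' : l.parities ++ r.parities = a.map not ++ (!y) :: b.map not := by
      simpa [parities_node, Function.comp_def] using congrArg (List.map not) h
    rcases List.append_eq_append_iff.1 h' with ⟨c, hc, hr⟩ | ⟨c, hl, hc⟩
    · obtain ⟨r', hr'⟩ := ihr hr
      refine ⟨node l r', ?_⟩
      have ha : a = (l.parities ++ c).map not := by
        simpa [Function.comp_def] using congrArg (List.map not) hc
      simp [parities_node, hr', ha, Function.comp_def]
    · rcases List.cons_eq_append_iff.1 hc with ⟨rfl, hr⟩ | ⟨c', rfl, hb⟩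
      · obtain ⟨r', hr'⟩ := ihr (a := []) hr
        refine ⟨node l r', ?_⟩
        have ha : a = l.parities.map not := by
          simpa [Function.comp_def] using (congrArg (List.map not) hl).symm
        simp [parities_node, hr', ha, Function.comp_def]
      · obtain ⟨l', hl'⟩ := ihl hl
        refine ⟨node l' r, ?_⟩
        have hb' : b = (c' ++ r.parities).map not := by
          simpa [Function.comp_def] using congrArg (List.map not) hb
        simp [parities_node, hl', hb', Function.comp_def]

end BTree

def Admissible (p : List Bool) : Prop := signSum p = 1 ∧ (p = [false] ∨ HasAdjPair p)

theorem Admissible.exists_contract {p : List Bool} (hp : Admissible p) (h0 : p ≠ [false]) :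
    ∃ a y b, p = a ++ y :: y :: b ∧ Admissible (a ++ (!y) :: b) := by
  obtain ⟨hs, h0' | ⟨a, x, b, rfl⟩⟩ := hp
  · exact absurd h0' h0
  suffices ∃ a' y b', a ++ x :: x :: b = a' ++ y :: y :: b' ∧
      (a' ++ (!y) :: b' = [false] ∨ HasAdjPair (a' ++ (!y) :: b')) by
    obtain ⟨a', y, b', he, h⟩ := this
    exact ⟨a', y, b', he, by rw [signSum_contract, ← he]; exact hs, h⟩
  clear h0
  -- Move the pair to the right end of its run: contracting it there creates a new pair with the
  -- next letter. If the run ends the word, a pair at most two letters further left works.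
  induction b generalizing a with
  | cons z b ih =>
    by_cases hz : z = x
    · subst hz
      simpa using ih (a ++ [z]) (by simpa using hs)
    · exact ⟨a, x, z :: b, rfl, .inr ⟨a, z, b, by simp [Bool.eq_not.2 hz]⟩⟩
  | nil =>
    rcases a.eq_nil_or_concat' with rfl | ⟨a, z, rfl⟩
    · cases x
      · exact absurd hs (by decide)
      · exact ⟨[], true, [], rfl, .inl rfl⟩
    by_cases hz : z = x
    · subst hz
      rcases a.eq_nil_or_concat' with rfl | ⟨a, w, rfl⟩
      · cases z <;> exact absurd hs (by decide)
      by_cases hw : w = z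
      · subst hw
        exact ⟨a, w, [w, w], by simp, .inr ⟨a ++ [!w], w, [], by simp⟩⟩
      · exact ⟨a ++ [w], z, [z], by simp, .inr ⟨a, w, [z], by simp [Bool.eq_not.2 hw]⟩⟩
    · exact ⟨a ++ [z], x, [], by simp, .inr ⟨a, z, [], by simp [Bool.eq_not.2 hz]⟩⟩

theorem BTree.exists_parities_eq_iff {p : List Bool} :
    (∃ t : BTree, t.parities = p) ↔ Admissible p := by
  refine ⟨fun ⟨t, ht⟩ => ht ▸ ⟨t.signSum_parities, t.parities_eq_or_hasAdjPair⟩, fun hp => ?_⟩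
  induction h : p.length using Nat.strong_induction_on generalizing p with
  | _ m ih =>
  by_cases h0 : p = [false]
  · exact ⟨leaf, h0 ▸ rfl⟩
  obtain ⟨a, y, b, rfl, hq⟩ := hp.exists_contract h0
  obtain ⟨t, ht⟩ := ih _ (by simp at h ⊢; omega) hq rfl
  simpa using exists_parities_expand ht

theorem List.IsChain.eq_of_head?_eq {l l' : List Bool} (hl : l.IsChain (· ≠ ·))
    (hl' : l'.IsChain (· ≠ ·)) (hlen : l.length = l'.length) (hhead : l.head? = l'.head?) :
    l = l' := by
  induction l generalizing l' with
  | nil => exact (List.length_eq_zero_iff.1 hlen.symm).symm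
  | cons x l ih =>
    obtain ⟨x', l', rfl⟩ := List.exists_cons_of_length_eq_add_one hlen.symm
    obtain rfl : x = x' := by simpa using hhead
    congr 1
    refine ih hl.tail hl'.tail (by simpa using hlen) ?_
    rcases l with _ | ⟨y, l⟩ <;> rcases l' with _ | ⟨y', l'⟩ <;> simp at hlen ⊢
    rw [List.isChain_cons_cons] at hl hl'
    rw [Bool.eq_not.2 (Ne.symm hl.1), Bool.eq_not.2 (Ne.symm hl'.1)]

theorem List.IsChain.count_false_and_head?_of_signSum_eq_one {l : List Bool}
    (hl : l.IsChain (· ≠ ·)) (hs : signSum l = 1) :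
    l.length + 1 = 2 * l.count false ∧ l.head? = some false := by
  have hc := hl.two_mul_count_bool_eq_ite false
  rw [signSum_eq_one_iff] at hs
  split_ifs at hc with he hh
  · obtain ⟨k, hk⟩ := he
    omega
  · exact ⟨by omega, (by simpa using hh : _ = _).symm⟩
  · omega

theorem List.count_ofFn {α : Type*} [DecidableEq α] {m : ℕ} (f : Fin m → α) (a : α) :
    (List.ofFn f).count a = #{i | f i = a} := by
  rw [← Multiset.coe_count, ← Fin.univ_val_map, Multiset.count_map, Finset.card_def,
    Finset.filter_val]
  simp [eq_comm]

theorem card_filter_card_zeros_eq_choose (m r : ℕ) :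
    #{v : Fin m → Fin 2 | #{i | v i = 0} = r} = m.choose r := by
  let e : (Fin m → Fin 2) ≃ Finset (Fin m) :=
    { toFun v := {i | v i = 0}
      invFun s i := if i ∈ s then 0 else 1
      left_inv v := by funext i; simp; grind
      right_inv s := by ext; simp }
  rw [← Fintype.card_subtype]
  calc _ = Fintype.card {s : Finset (Fin m) // #s = r} :=
        Fintype.card_congr (e.subtypeEquiv fun _ => Iff.rfl)
    _ = m.choose r := by simp

theorem val_eq_mod_two_iff_finTwoEquiv_eq_bodd (x : Fin 2) (d : ℕ) :
    (x : ℕ) = d % 2 ↔ finTwoEquiv x = d.bodd := by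
  rw [Nat.mod_two_of_bodd]
  fin_cases x <;> cases d.bodd <;> simp [finTwoEquiv]

theorem map_bodd_eq_ofFn_iff {m : ℕ} (ds : List ℕ) (v : Fin m → Fin 2) :
    ds.map Nat.bodd = List.ofFn (finTwoEquiv ∘ v) ↔
      ds.length = m ∧ ∀ i : Fin m, (v i : ℕ) = ds.getD i 0 % 2 := by
  rw [List.ext_getElem_iff]
  simp only [List.length_map, List.length_ofFn, List.getElem_map, List.getElem_ofFn,
    Function.comp_apply]
  refine and_congr_right fun hlen => ?_
  subst hlen
  constructor
  · intro h i
    rw [List.getD_eq_getElem _ _ i.isLt, val_eq_mod_two_iff_finTwoEquiv_eq_bodd]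
    exact (h i i.isLt i.isLt).symm
  · intro h i h1 _
    have := h ⟨i, h1⟩
    rw [List.getD_eq_getElem _ _ h1, val_eq_mod_two_iff_finTwoEquiv_eq_bodd] at this
    exact this.symm

theorem count_false_ofFn_finTwoEquiv {m : ℕ} (v : Fin m → Fin 2) :
    (List.ofFn (finTwoEquiv ∘ v)).count false = #{i | v i = 0} := by
  rw [List.count_ofFn]
  congr! 2 with i
  exact finTwoEquiv.eq_symm_apply.symm

theorem signSum_ofFn_eq_one_iff {n : ℕ} (v : Fin (n + 1) → Fin 2) :
    signSum (List.ofFn (finTwoEquiv ∘ v)) = 1 ↔ (n + #{i | v i = 0}) % 3 = 1 := by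
  rw [signSum_eq_one_iff, List.length_ofFn, count_false_ofFn_finTwoEquiv]
  omega

def alternatingVec (m : ℕ) : Fin m → Fin 2 := fun i => finTwoEquiv.symm (i : ℕ).bodd

theorem isChain_ofFn_alternatingVec (m : ℕ) :
    (List.ofFn (finTwoEquiv ∘ alternatingVec m)).IsChain (· ≠ ·) := by
  simp [alternatingVec, List.isChain_ofFn, Function.comp_def, Nat.bodd_succ]

theorem card_filter_alternatingVec_eq_zero {n r : ℕ} (h : n + 2 = 2 * r) :
    #{i | alternatingVec (n + 1) i = 0} = r := by
  have hc := (isChain_ofFn_alternatingVec (n + 1)).two_mul_count_bool_eq_ite false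
  rw [count_false_ofFn_finTwoEquiv] at hc
  simp at hc
  split_ifs at hc with he hf
  · obtain ⟨k, hk⟩ := he
    omega
  · omega
  · simp [alternatingVec] at hf

theorem isChain_ofFn_finTwoEquiv_iff {n r : ℕ} (h3 : (n + r) % 3 = 1) (v : Fin (n + 1) → Fin 2)
    (hv : #{i | v i = 0} = r) :
    (List.ofFn (finTwoEquiv ∘ v)).IsChain (· ≠ ·) ↔
      n + 2 = 2 * r ∧ v = alternatingVec (n + 1) := by
  refine ⟨fun hc => ?_, fun ⟨_, hv⟩ => hv ▸ isChain_ofFn_alternatingVec (n + 1)⟩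
  obtain ⟨hlen, hhead⟩ :=
    hc.count_false_and_head?_of_signSum_eq_one ((signSum_ofFn_eq_one_iff v).2 (hv ▸ h3))
  rw [List.length_ofFn, count_false_ofFn_finTwoEquiv, hv] at hlen
  refine ⟨by omega, finTwoEquiv.injective.comp_left (List.ofFn_injective ?_)⟩
  exact hc.eq_of_head?_eq (isChain_ofFn_alternatingVec _) (by simp)
    (by rw [hhead]; simp [alternatingVec])

theorem exists_tree_iff {n : ℕ} (hn : 1 ≤ n) (v : Fin (n + 1) → Fin 2) :
    (∃ t : BTree, t.numLeaves = n + 1 ∧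
        ∀ i : Fin (n + 1), (v i : ℕ) = t.depths.getD i 0 % 2) ↔
      signSum (List.ofFn (finTwoEquiv ∘ v)) = 1 ∧
        ¬ (List.ofFn (finTwoEquiv ∘ v)).IsChain (· ≠ ·) := by
  have hne : List.ofFn (finTwoEquiv ∘ v) ≠ [false] := fun h => by
    have := congrArg List.length h
    simp at this
    omega
  refine (exists_congr fun (t : BTree) => (map_bodd_eq_ofFn_iff t.depths v).symm).trans ?_
  show (∃ t : BTree, t.parities = _) ↔ _
  rw [BTree.exists_parities_eq_iff, Admissible, hasAdjPair_iff_not_isChain, or_iff_right hne]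

theorem exists_tree_and_card_zeros_iff {n r : ℕ} (hn : 1 ≤ n) (v : Fin (n + 1) → Fin 2) :
    ((∃ t : BTree, t.numLeaves = n + 1 ∧
        ∀ i : Fin (n + 1), (v i : ℕ) = t.depths.getD i 0 % 2) ∧ #{i | v i = 0} = r) ↔
      #{i | v i = 0} = r ∧ (n + r) % 3 = 1 ∧
        ¬ (n + 2 = 2 * r ∧ v = alternatingVec (n + 1)) := by
  rw [exists_tree_iff hn, signSum_ofFn_eq_one_iff]
  constructor
  · rintro ⟨⟨h3, hc⟩, rfl⟩
    exact ⟨rfl, h3, fun h => hc ((isChain_ofFn_finTwoEquiv_iff h3 v rfl).2 h)⟩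
  · rintro ⟨rfl, h3, hc⟩
    exact ⟨⟨h3, fun h => hc ((isChain_ofFn_finTwoEquiv_iff h3 v rfl).1 h)⟩, rfl⟩

theorem stmt11_general (n r : ℕ) (hn : 1 ≤ n) :
    Nat.card {v : Fin (n + 1) → Fin 2 //
        (∃ t : BTree, t.numLeaves = n + 1 ∧
          ∀ i : Fin (n + 1), (v i : ℕ) = t.depths.getD i 0 % 2) ∧
        (Finset.univ.filter (fun i => v i = 0)).card = r} =
      if (n + r) % 3 = 1 then
        (if n + 2 = 2 * r then Nat.choose (n + 1) r - 1 else Nat.choose (n + 1) r)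
      else 0 := by
  classical
  rw [Nat.card_eq_fintype_card, Fintype.card_subtype,
    Finset.filter_congr fun v _ => exists_tree_and_card_zeros_iff hn v]
  split_ifs with h3 h2
  · simp only [h3, h2, true_and, ← Finset.filter_filter, Finset.filter_ne']
    rw [card_erase_of_mem (by simp [card_filter_alternatingVec_eq_zero h2]),
      card_filter_card_zeros_eq_choose]
  · simp [h3, h2, card_filter_card_zeros_eq_choose]
  · simp [h3]

theorem stmt11 (n r : ℕ) (hn : 1 ≤ n) (hr : r ≤ n + 1) :
    Nat.card {v : Fin (n + 1) → Fin 2 //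
        (∃ t : BTree, t.numLeaves = n + 1 ∧
          ∀ i : Fin (n + 1), (v i : ℕ) = t.depths.getD i 0 % 2) ∧
        (Finset.univ.filter (fun i => v i = 0)).card = r} =
      if (n + r) % 3 = 1 then
        (if n + 2 = 2 * r then Nat.choose (n + 1) r - 1 else Nat.choose (n + 1) r)
      else 0 :=
  stmt11_general n r hn
end

section
/- For n ≥ 1, the number of admissible binary sequences in {0,1}^{n+1} equals (2^{n+1} - 1)/3 if n is odd and (2^{n+1} - 2)/3 if n is even. -/
/-!
Modulo 3, `1 + [d = 0] ≡ ±1`, so the residue of `m + #{i | v i = 0}` for a binary word `v` of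
length `m` is a sum of `m` signs. As `(ω + ω⁻¹) ^ m = (-1) ^ m` for a primitive cube root of unity
`ω`, the number of words of residue `r` is `(2 ^ m + (-1) ^ m (3 [r = 0] - 1)) / 3`; we prove this
through the recursion obtained by splitting off the first letter. The admissible sequences are the
words of length `n + 1` with residue `2`, minus the alternating ones of residue `2`: there is one,
`0101…0`, when `n` is even and none when `n` is odd.
-/

/-- A binary sequence `(d_0,...,d_n)` (encoded as `v : Fin (n+1) → Fin 2`) is
admissible if it is non-alternating (when `n ≥ 1`, two consecutive entries agree)
and `n + #{i : d_i = 0} ≡ 1 (mod 3)`. -/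
def AdmissibleSeq {n : ℕ} (v : Fin (n + 1) → Fin 2) : Prop :=
  (1 ≤ n → ∃ j : Fin n, v j.castSucc = v j.succ) ∧
  (n + (Finset.univ.filter (fun i => v i = 0)).card) % 3 = 1

open Finset Fin.NatCast

instance {n : ℕ} : DecidablePred (@AdmissibleSeq n) := fun v => by
  unfold AdmissibleSeq; infer_instance

def zeroCount {m : ℕ} (v : Fin m → Fin 2) : ℕ := #{i | v i = 0}

lemma zeroCount_cons {m : ℕ} (a : Fin 2) (w : Fin m → Fin 2) :
    zeroCount (Fin.cons a w : Fin (m + 1) → Fin 2) = zeroCount w + if a = 0 then 1 else 0 := by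
  simp only [zeroCount, card_filter, Fin.sum_univ_succ, Fin.cons_zero, Fin.cons_succ]
  ring

lemma admissibleSeq_iff {n : ℕ} (hn : 1 ≤ n) (v : Fin (n + 1) → Fin 2) :
    AdmissibleSeq v ↔ (n + zeroCount v) % 3 = 1 ∧ ∃ j : Fin n, v j.castSucc = v j.succ := by
  rw [AdmissibleSeq, zeroCount, and_comm, imp_iff_right hn]

def residueCount (m r : ℕ) : ℕ := #{v : Fin m → Fin 2 | (m + zeroCount v) % 3 = r}

lemma residueCount_zero (r : ℕ) : residueCount 0 r = if r = 0 then 1 else 0 := by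
  simp [residueCount, zeroCount, eq_comm, apply_ite]

lemma residueCount_succ (m r : ℕ) (hr : r < 3) :
    residueCount (m + 1) r = residueCount m ((r + 1) % 3) + residueCount m ((r + 2) % 3) := by
  simp only [residueCount, card_filter]
  rw [← Fintype.sum_equiv (Fin.consEquiv fun _ => Fin 2) (fun p => _) _ (fun _ => rfl),
    Fintype.sum_prod_type, Fin.sum_univ_two]
  congr 1 <;> refine Fintype.sum_congr _ _ fun w => if_congr ?_ rfl rfl <;>
    simp only [Fin.consEquiv, Equiv.coe_fn_mk, zeroCount_cons, one_ne_zero, ↓reduceIte] <;> omega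

lemma three_mul_residueCount (m r : ℕ) (hr : r < 3) :
    (3 * residueCount m r : ℤ) = 2 ^ m + (-1) ^ m * if r = 0 then 2 else -1 := by
  induction m generalizing r with
  | zero => interval_cases r <;> simp [residueCount_zero]
  | succ m ih =>
    rw [residueCount_succ m r hr]
    have h₁ := ih ((r + 1) % 3) (Nat.mod_lt _ (by norm_num))
    have h₂ := ih ((r + 2) % 3) (Nat.mod_lt _ (by norm_num))
    interval_cases r <;>
      simp only [Nat.reduceAdd, Nat.reduceMod, Nat.cast_add, OfNat.ofNat_ne_zero, one_ne_zero,
        ↓reduceIte] at h₁ h₂ ⊢ <;>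
      linear_combination h₁ + h₂

lemma three_mul_residueCount_two (n : ℕ) :
    3 * residueCount (n + 1) 2 = if Even n then 2 ^ (n + 1) + 1 else 2 ^ (n + 1) - 1 := by
  have h := three_mul_residueCount (n + 1) 2 (by norm_num)
  rcases Nat.even_or_odd n with hn | hn
  · rw [if_pos hn]
    norm_num [hn.add_one.neg_one_pow] at h
    exact_mod_cast h
  · rw [if_neg (Nat.not_even_iff_odd.mpr hn)]
    norm_num [hn.add_one.neg_one_pow] at h
    zify [Nat.one_le_two_pow]
    linear_combination h

def alternating (m : ℕ) (a : Fin 2) : Fin m → Fin 2 := fun i => a + (i : ℕ)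

lemma alternating_succ (m : ℕ) (a : Fin 2) :
    alternating (m + 1) a = Fin.cons a (alternating m (a + 1)) := by
  funext i
  cases i using Fin.cases with
  | zero => simp [alternating]
  | succ i => simp [alternating, add_assoc, add_comm (1 : Fin 2)]

lemma zeroCount_alternating (m : ℕ) (a : Fin 2) :
    zeroCount (alternating m a) = (m + 1 - a) / 2 := by
  induction m generalizing a with
  | zero => fin_cases a <;> rfl
  | succ m ih =>
    fin_cases a
    · simp [alternating_succ, zeroCount_cons, ih]; omega
    · simp [alternating_succ, zeroCount_cons, ih]

lemma alternating_injective (m : ℕ) : (alternating (m + 1)).Injective := fun a b h => by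
  simpa [alternating] using congrFun h 0

lemma alternating_castSucc_ne_succ {n : ℕ} (a : Fin 2) (j : Fin n) :
    alternating (n + 1) a j.castSucc ≠ alternating (n + 1) a j.succ := by
  simp [alternating]

lemma eq_alternating_of_forall_ne {n : ℕ} {v : Fin (n + 1) → Fin 2}
    (h : ∀ j : Fin n, v j.castSucc ≠ v j.succ) : v = alternating (n + 1) (v 0) := by
  funext i
  induction i using Fin.induction with
  | zero => simp [alternating]
  | succ j ih =>
    have succ_of_ne : ∀ x y : Fin 2, x ≠ y → y = x + 1 := by decide
    simp [succ_of_ne _ _ (h j), ih, alternating, add_assoc]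

lemma card_filter_and_forall_ne {n : ℕ} (p : (Fin (n + 1) → Fin 2) → Prop) [DecidablePred p] :
    #{v | p v ∧ ∀ j : Fin n, v j.castSucc ≠ v j.succ} = #{a | p (alternating (n + 1) a)} := by
  symm
  refine card_bij (fun a _ => alternating (n + 1) a) ?_
    (fun a _ b _ h => alternating_injective n h) ?_
  · intro a ha
    simp only [mem_filter, mem_univ, true_and] at ha ⊢
    exact ⟨ha, alternating_castSucc_ne_succ a⟩
  · intro v hv
    simp only [mem_filter, mem_univ, true_and] at hv
    have hv' := eq_alternating_of_forall_ne hv.2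
    exact ⟨v 0, by simpa [← hv'] using hv.1, hv'.symm⟩

lemma card_filter_alternating (n : ℕ) :
    #{a | (n + zeroCount (alternating (n + 1) a)) % 3 = 1} = if Even n then 1 else 0 := by
  rw [card_filter, Fin.sum_univ_two]
  simp only [zeroCount_alternating, Fin.isValue, Fin.val_zero, Fin.val_one, Nat.even_iff]
  split_ifs <;> omega

lemma residueCount_eq_card_admissibleSeq_add {n : ℕ} (hn : 1 ≤ n) :
    residueCount (n + 1) 2 =
      #{v : Fin (n + 1) → Fin 2 | AdmissibleSeq v} + if Even n then 1 else 0 := by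
  rw [← card_filter_alternating, ← card_filter_and_forall_ne (fun v => (n + zeroCount v) % 3 = 1),
    residueCount, ← card_filter_add_card_filter_not (fun v => ∃ j : Fin n, v j.castSucc = v j.succ),
    filter_filter, filter_filter]
  congr 2 <;> ext v <;>
    simp only [mem_filter, mem_univ, true_and, admissibleSeq_iff hn, not_exists, ne_eq] <;>
    exact and_congr_left fun _ => by omega

theorem stmt13 (n : ℕ) (hn : 1 ≤ n) :
    Nat.card {v : Fin (n + 1) → Fin 2 // AdmissibleSeq v} =
      if Odd n then (2 ^ (n + 1) - 1) / 3 else (2 ^ (n + 1) - 2) / 3 := by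
  rw [Nat.card_eq_fintype_card, Fintype.card_subtype]
  have h := three_mul_residueCount_two n
  rw [residueCount_eq_card_admissibleSeq_add hn] at h
  simp only [← Nat.not_even_iff_odd]
  split_ifs at h ⊢ <;> omega
end
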